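/- arXiv:1610.07016 — 3 statements merged into one kernel-verified Lean document; each statement's English description precedes it below -/
import Mathlib

section
/- Let Ω ⊆ ℂⁿ be a bounded open set with boundary distance δ, let s ∈ (0, 2n), and let g : Ω → ℂ be measurable. Assume there are constants C₁, C₂ > 0 such that (i) ∫_{{δ ≤ ε}} |g|² dV ≤ C₁ ε^s for all ε ∈ (0,1], and (ii) |g(z)|² ≤ C₂ δ(z)^{s − 2n} for all z ∈ Ω. Then for every τ with 0 < τ < 2s/(2n − s), the integral ∫_Ω |g|^{2+τ} dV is finite. -/
/-!
Write `F = ‖g‖²`, `q = τ / 2` and `β = 2n - s`, so that (ii) reads `F ≤ C₂ δ^(-β)` and the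
integrand is `F^(1 + q)`. Split `Ω` into the region `{δ > 1}`, where `F` is bounded, and the dyadic
shells `{2⁻ᵏ/2 < δ ≤ 2⁻ᵏ}`. On the `k`-th shell (ii) gives `F^q ≲ 2^(k q β)` and (i) gives
`∫ F ≲ 2^(-k s)`, so `∫ F^(1 + q) ≲ 2^(-k (s - q β))` there; these bounds form a convergent
geometric series because `q β < s` is exactly `τ < 2s / (2n - s)`.
-/

open MeasureTheory

noncomputable instance (n : ℕ) : MeasurableSpace (EuclideanSpace ℂ (Fin n)) := borel _
instance (n : ℕ) : BorelSpace (EuclideanSpace ℂ (Fin n)) := ⟨rfl⟩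
noncomputable instance (n : ℕ) : InnerProductSpace ℝ (EuclideanSpace ℂ (Fin n)) :=
  InnerProductSpace.rclikeToReal ℂ _

open Set
open scoped ENNReal

lemma Metric.infDist_frontier_pos {E : Type*} [NormedAddCommGroup E] [NormedSpace ℝ E]
    [Nontrivial E] {Ω : Set E} (hΩ : IsOpen Ω) (hb : Bornology.IsBounded Ω) {z : E}
    (hz : z ∈ Ω) : 0 < Metric.infDist z (frontier Ω) := by
  have hfr : (frontier Ω).Nonempty :=
    nonempty_frontier_iff.2 ⟨⟨z, hz⟩, fun h => NormedSpace.unbounded_univ ℝ E (h ▸ hb)⟩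
  exact (isClosed_frontier.notMem_iff_infDist_pos hfr).1 fun hzf => (hΩ.frontier_eq ▸ hzf).2 hz

lemma Real.rpow_le_mul_rpow_neg_mul {x C d β q : ℝ} (hx : 0 ≤ x) (hC : 0 ≤ C) (hd : 0 < d)
    (hq : 0 ≤ q) (h : x ≤ C * d ^ (-β)) : x ^ q ≤ C ^ q * d ^ (-(q * β)) :=
  calc x ^ q ≤ (C * d ^ (-β)) ^ q := Real.rpow_le_rpow hx h hq
    _ = C ^ q * d ^ (-(q * β)) := by
      rw [Real.mul_rpow hC (by positivity), ← Real.rpow_mul hd.le]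
      ring_nf

lemma Real.rpow_half_pow_div_two_mul_rpow (k : ℕ) (a s : ℝ) :
    ((2⁻¹ : ℝ) ^ k / 2) ^ (-a) * ((2⁻¹ : ℝ) ^ k) ^ s = 2 ^ a * ((2⁻¹ : ℝ) ^ (s - a)) ^ k := by
  have ht : (0 : ℝ) < 2⁻¹ ^ k := by positivity
  rw [Real.div_rpow ht.le zero_le_two, Real.rpow_neg zero_le_two, div_inv_eq_mul,
    mul_right_comm, ← Real.rpow_add ht, ← Real.rpow_natCast_mul (by norm_num),
    ← Real.rpow_mul_natCast (by norm_num)]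
  ring_nf

lemma exists_half_pow_div_two_lt_and_le {d : ℝ} (hd0 : 0 < d) (hd1 : d ≤ 1) :
    ∃ k : ℕ, (2⁻¹ : ℝ) ^ k / 2 < d ∧ d ≤ (2⁻¹ : ℝ) ^ k := by
  obtain ⟨k, hlt, hle⟩ :=
    exists_nat_pow_near_of_lt_one hd0 hd1 (y := 2⁻¹) (by norm_num) (by norm_num)
  exact ⟨k, by rwa [pow_succ, ← div_eq_mul_inv] at hlt, hle⟩

section BoundaryShells

variable {α : Type*}

def boundaryShell (Ω : Set α) (δ : α → ℝ) (t : ℝ) : Set α :=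
  {z ∈ Ω | t / 2 < δ z ∧ δ z ≤ t}

lemma subset_union_iUnion_boundaryShell {Ω : Set α} {δ : α → ℝ} (hδ : ∀ z ∈ Ω, 0 < δ z) :
    Ω ⊆ {z ∈ Ω | 1 < δ z} ∪ ⋃ k : ℕ, boundaryShell Ω δ ((2⁻¹ : ℝ) ^ k) := by
  intro z hz
  rcases lt_or_ge 1 (δ z) with h | h
  · exact Or.inl ⟨hz, h⟩
  · obtain ⟨k, hk⟩ := exists_half_pow_div_two_lt_and_le (hδ z hz) h
    exact Or.inr (mem_iUnion.2 ⟨k, hz, hk⟩)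

variable [MeasurableSpace α] {μ : Measure α}

lemma measurableSet_boundaryShell {Ω : Set α} {δ : α → ℝ} (hΩ : MeasurableSet Ω)
    (hδ : Measurable δ) (t : ℝ) : MeasurableSet (boundaryShell Ω δ t) :=
  hΩ.inter ((measurableSet_lt measurable_const hδ).inter (measurableSet_le hδ measurable_const))

lemma setLIntegral_lt_top_of_geometric_cover {f : α → ℝ≥0∞} {Ω B : Set α} {A : ℕ → Set α}
    {c ρ : ℝ≥0∞} (hcover : Ω ⊆ B ∪ ⋃ k, A k) (hB : ∫⁻ z in B, f z ∂μ < ∞) (hc : c ≠ ∞)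
    (hρ : ρ < 1) (hA : ∀ k, ∫⁻ z in A k, f z ∂μ ≤ c * ρ ^ k) : ∫⁻ z in Ω, f z ∂μ < ∞ := by
  have hA_lt_top : ∫⁻ z in ⋃ k, A k, f z ∂μ < ∞ :=
    calc ∫⁻ z in ⋃ k, A k, f z ∂μ ≤ ∑' k, ∫⁻ z in A k, f z ∂μ := lintegral_iUnion_le _ _
      _ ≤ ∑' k, c * ρ ^ k := ENNReal.tsum_le_tsum hA
      _ = c * (1 - ρ)⁻¹ := by rw [ENNReal.tsum_mul_left, ENNReal.tsum_geometric]
      _ < ∞ := ENNReal.mul_lt_top hc.lt_top (ENNReal.inv_lt_top.2 (tsub_pos_of_lt hρ))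
  calc ∫⁻ z in Ω, f z ∂μ ≤ ∫⁻ z in B ∪ ⋃ k, A k, f z ∂μ := lintegral_mono_set hcover
    _ ≤ (∫⁻ z in B, f z ∂μ) + ∫⁻ z in ⋃ k, A k, f z ∂μ := lintegral_union_le _ _ _
    _ < ∞ := ENNReal.add_lt_top.2 ⟨hB, hA_lt_top⟩

variable {Ω : Set α} {δ F : α → ℝ} {s β q C₁ C₂ : ℝ}

lemma setLIntegral_sep_one_lt_rpow_one_add_lt_top (hΩ : MeasurableSet Ω) (hμΩ : μ Ω < ∞)
    (hδ : Measurable δ) (hF : ∀ z ∈ Ω, 0 ≤ F z) (hC₂ : 0 ≤ C₂) (hβ : 0 ≤ β) (hq : 0 ≤ q)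
    (h2 : ∀ z ∈ Ω, F z ≤ C₂ * δ z ^ (-β)) :
    ∫⁻ z in {z ∈ Ω | 1 < δ z}, ENNReal.ofReal (F z ^ (1 + q)) ∂μ < ∞ := by
  have hbound : ∀ z ∈ {z ∈ Ω | 1 < δ z}, ENNReal.ofReal (F z ^ (1 + q)) ≤
      ENNReal.ofReal (C₂ ^ (1 + q)) := by
    rintro z ⟨hz, hδz⟩
    have hFC : F z ≤ C₂ := by
      have := h2 z hz
      have : δ z ^ (-β) ≤ 1 := Real.rpow_le_one_of_one_le_of_nonpos hδz.le (by linarith)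
      nlinarith [hF z hz]
    exact ENNReal.ofReal_le_ofReal (Real.rpow_le_rpow (hF z hz) hFC (by linarith))
  calc ∫⁻ z in {z ∈ Ω | 1 < δ z}, ENNReal.ofReal (F z ^ (1 + q)) ∂μ
      ≤ ∫⁻ _ in {z ∈ Ω | 1 < δ z}, ENNReal.ofReal (C₂ ^ (1 + q)) ∂μ :=
        setLIntegral_mono' (hΩ.inter (measurableSet_lt measurable_const hδ)) hbound
    _ ≤ ENNReal.ofReal (C₂ ^ (1 + q)) * μ Ω := by
        rw [setLIntegral_const]; gcongr; exact sep_subset _ _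
    _ < ∞ := ENNReal.mul_lt_top ENNReal.ofReal_lt_top hμΩ

lemma setLIntegral_boundaryShell_rpow_one_add_le (hΩ : MeasurableSet Ω) (hδ : Measurable δ)
    (hδΩ : ∀ z ∈ Ω, 0 < δ z) (hF : ∀ z ∈ Ω, 0 ≤ F z) (hC₂ : 0 ≤ C₂) (hβ : 0 ≤ β) (hq : 0 ≤ q)
    (h1 : ∀ ε ∈ Ioc (0 : ℝ) 1,
      ∫⁻ z in {z ∈ Ω | δ z ≤ ε}, ENNReal.ofReal (F z) ∂μ ≤ ENNReal.ofReal (C₁ * ε ^ s))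
    (h2 : ∀ z ∈ Ω, F z ≤ C₂ * δ z ^ (-β)) {t : ℝ} (ht : t ∈ Ioc (0 : ℝ) 1) :
    ∫⁻ z in boundaryShell Ω δ t, ENNReal.ofReal (F z ^ (1 + q)) ∂μ ≤
      ENNReal.ofReal (C₂ ^ q * (t / 2) ^ (-(q * β)) * (C₁ * t ^ s)) := by
  set c := C₂ ^ q * (t / 2) ^ (-(q * β))
  have hc : 0 ≤ c := by have := ht.1; positivity
  have hpoint : ∀ z ∈ boundaryShell Ω δ t,
      ENNReal.ofReal (F z ^ (1 + q)) ≤ ENNReal.ofReal c * ENNReal.ofReal (F z) := by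
    rintro z ⟨hz, hlo, -⟩
    have hFq : F z ^ q ≤ c :=
      (Real.rpow_le_mul_rpow_neg_mul (hF z hz) hC₂ (hδΩ z hz) hq (h2 z hz)).trans <|
        mul_le_mul_of_nonneg_left (Real.rpow_le_rpow_of_nonpos (by linarith [ht.1]) hlo.le
          (by nlinarith)) (by positivity)
    rw [← ENNReal.ofReal_mul hc]
    refine ENNReal.ofReal_le_ofReal ?_
    calc F z ^ (1 + q) = F z * F z ^ q := by
          rw [Real.rpow_add' (hF z hz) (by linarith), Real.rpow_one]
      _ ≤ F z * c := mul_le_mul_of_nonneg_left hFq (hF z hz)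
      _ = c * F z := mul_comm _ _
  calc ∫⁻ z in boundaryShell Ω δ t, ENNReal.ofReal (F z ^ (1 + q)) ∂μ
      ≤ ∫⁻ z in boundaryShell Ω δ t, ENNReal.ofReal c * ENNReal.ofReal (F z) ∂μ :=
        setLIntegral_mono' (measurableSet_boundaryShell hΩ hδ t) hpoint
    _ = ENNReal.ofReal c * ∫⁻ z in boundaryShell Ω δ t, ENNReal.ofReal (F z) ∂μ :=
        lintegral_const_mul' _ _ ENNReal.ofReal_ne_top
    _ ≤ ENNReal.ofReal c * ENNReal.ofReal (C₁ * t ^ s) := by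
        gcongr
        refine (lintegral_mono_set ?_).trans (h1 t ht)
        exact fun z hz => ⟨hz.1, hz.2.2⟩
    _ = ENNReal.ofReal (c * (C₁ * t ^ s)) := (ENNReal.ofReal_mul hc).symm

theorem setLIntegral_rpow_one_add_lt_top (hΩ : MeasurableSet Ω) (hμΩ : μ Ω < ∞)
    (hδ : Measurable δ) (hδΩ : ∀ z ∈ Ω, 0 < δ z) (hF : ∀ z ∈ Ω, 0 ≤ F z) (hC₂ : 0 ≤ C₂)
    (hβ : 0 ≤ β) (hq : 0 ≤ q) (hqs : q * β < s)
    (h1 : ∀ ε ∈ Ioc (0 : ℝ) 1,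
      ∫⁻ z in {z ∈ Ω | δ z ≤ ε}, ENNReal.ofReal (F z) ∂μ ≤ ENNReal.ofReal (C₁ * ε ^ s))
    (h2 : ∀ z ∈ Ω, F z ≤ C₂ * δ z ^ (-β)) :
    ∫⁻ z in Ω, ENNReal.ofReal (F z ^ (1 + q)) ∂μ < ∞ := by
  set r : ℝ := 2⁻¹ ^ (s - q * β)
  have hr : 0 ≤ r := by positivity
  have hr1 : r < 1 := Real.rpow_lt_one (by norm_num) (by norm_num) (by linarith)
  set K : ℝ := C₂ ^ q * 2 ^ (q * β) * C₁
  refine setLIntegral_lt_top_of_geometric_cover (subset_union_iUnion_boundaryShell hδΩ)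
    (setLIntegral_sep_one_lt_rpow_one_add_lt_top hΩ hμΩ hδ hF hC₂ hβ hq h2)
    (ENNReal.ofReal_ne_top (r := K)) (ENNReal.ofReal_lt_one.2 hr1) fun k => ?_
  calc ∫⁻ z in boundaryShell Ω δ (2⁻¹ ^ k), ENNReal.ofReal (F z ^ (1 + q)) ∂μ
      ≤ ENNReal.ofReal (C₂ ^ q * (2⁻¹ ^ k / 2) ^ (-(q * β)) * (C₁ * (2⁻¹ ^ k) ^ s)) :=
        setLIntegral_boundaryShell_rpow_one_add_le hΩ hδ hδΩ hF hC₂ hβ hq h1 h2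
          ⟨by positivity, pow_le_one₀ (by norm_num) (by norm_num)⟩
    _ = ENNReal.ofReal (K * r ^ k) := by
        congr 1
        linear_combination C₂ ^ q * C₁ * Real.rpow_half_pow_div_two_mul_rpow k (q * β) s
    _ = ENNReal.ofReal K * ENNReal.ofReal r ^ k := by
        rw [ENNReal.ofReal_mul' (by positivity), ENNReal.ofReal_pow hr]

end BoundaryShells

theorem stmt4_general (n : ℕ) (hn : 1 ≤ n) (Ω : Set (EuclideanSpace ℂ (Fin n))) (hΩ : IsOpen Ω)
    (hb : Bornology.IsBounded Ω) (s : ℝ) (hs : s < 2 * n)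
    (g : EuclideanSpace ℂ (Fin n) → ℂ)
    (C₁ C₂ : ℝ) (hC₂ : 0 < C₂)
    (h1 : ∀ ε ∈ Set.Ioc (0 : ℝ) 1,
      ∫⁻ z in {z ∈ Ω | Metric.infDist z (frontier Ω) ≤ ε},
        ENNReal.ofReal (‖g z‖ ^ (2 : ℝ)) ≤ ENNReal.ofReal (C₁ * ε ^ s))
    (h2 : ∀ z ∈ Ω, ‖g z‖ ^ (2 : ℝ) ≤ C₂ * Metric.infDist z (frontier Ω) ^ (s - 2 * n))
    (τ : ℝ) (hτ0 : 0 < τ) (hτ : τ < 2 * s / (2 * n - s)) :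
    ∫⁻ z in Ω, ENNReal.ofReal (‖g z‖ ^ (2 + τ)) < ⊤ := by
  have : NeZero n := ⟨by omega⟩
  have hqs : τ / 2 * (2 * n - s) < s := by
    have := (lt_div_iff₀ (by linarith)).1 hτ
    linarith
  have hpow : ∀ z, ‖g z‖ ^ (2 + τ) = (‖g z‖ ^ (2 : ℝ)) ^ (1 + τ / 2) := fun z => by
    rw [← Real.rpow_mul (norm_nonneg _)]
    ring_nf
  simp only [hpow]
  exact setLIntegral_rpow_one_add_lt_top (F := fun z => ‖g z‖ ^ (2 : ℝ))
    hΩ.measurableSet hb.measure_lt_top (Metric.continuous_infDist_pt _).measurable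
    (fun z hz => Metric.infDist_frontier_pos hΩ hb hz) (fun z _ => by positivity) hC₂.le
    (by linarith) (by positivity) hqs h1 (by simpa only [neg_sub] using h2)

theorem stmt4 (n : ℕ) (hn : 1 ≤ n) (Ω : Set (EuclideanSpace ℂ (Fin n))) (hΩ : IsOpen Ω)
    (hb : Bornology.IsBounded Ω) (s : ℝ) (hs0 : 0 < s) (hs : s < 2 * n)
    (g : EuclideanSpace ℂ (Fin n) → ℂ) (hg : Measurable g)
    (C₁ C₂ : ℝ) (hC₁ : 0 < C₁) (hC₂ : 0 < C₂)
    (h1 : ∀ ε ∈ Set.Ioc (0 : ℝ) 1,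
      ∫⁻ z in {z ∈ Ω | Metric.infDist z (frontier Ω) ≤ ε},
        ENNReal.ofReal (‖g z‖ ^ (2 : ℝ)) ≤ ENNReal.ofReal (C₁ * ε ^ s))
    (h2 : ∀ z ∈ Ω, ‖g z‖ ^ (2 : ℝ) ≤ C₂ * Metric.infDist z (frontier Ω) ^ (s - 2 * n))
    (τ : ℝ) (hτ0 : 0 < τ) (hτ : τ < 2 * s / (2 * n - s)) :
    ∫⁻ z in Ω, ENNReal.ofReal (‖g z‖ ^ (2 + τ)) < ⊤ :=
  stmt4_general n hn Ω hΩ hb s hs g C₁ C₂ hC₂ h1 h2 τ hτ0 hτ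
end

section
/- Let Ω₁, Ω₂ ⊆ ℂⁿ be bounded open sets with boundary distance functions δ₁, δ₂. Let F : closure(Ω₁) → closure(Ω₂) be a map with F(Ω₁) ⊆ Ω₂ and F(∂Ω₁) ⊆ ∂Ω₂, which is γ-Hölder continuous with constant L on closure(Ω₁) for some 0 < γ ≤ 1. Suppose ρ₂ : Ω₂ → ℝ satisfies −ρ₂(w) ≤ C·δ₂(w)^α for all w ∈ Ω₂, for some constants C, α > 0. Then ρ₁ := ρ₂ ∘ F satisfies −ρ₁(z) ≤ C·L^α·δ₁(z)^{γα} for all z ∈ Ω₁. -/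
/-!
Pick a boundary point `z*` of `Ω₁` nearest to `z`. Since `F z*` lies on `∂Ω₂`,
`δ₂(F z) ≤ |F z - F z*| ≤ L δ₁(z)^γ`, and the growth bound on `ρ₂` transports along this
inequality. The only degenerate case is an empty `∂Ω₁`, which for a bounded nonempty `Ω₁`
forces the ambient space to be a point.
-/

open Metric Set

theorem Metric.infDist_eq_zero_of_subsingleton {X : Type*} [PseudoMetricSpace X] [Subsingleton X]
    (x : X) (s : Set X) : infDist x s = 0 := by
  rcases s.eq_empty_or_nonempty with rfl | ⟨y, hy⟩
  · exact infDist_empty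
  · exact Subsingleton.elim x y ▸ infDist_zero_of_mem hy

theorem Bornology.IsBounded.nonempty_frontier {E : Type*} [NormedAddCommGroup E] [NormedSpace ℝ E]
    [Nontrivial E] {s : Set E} (hs : Bornology.IsBounded s) (hne : s.Nonempty) :
    (frontier s).Nonempty :=
  nonempty_frontier_iff.mpr ⟨hne, fun h => NormedSpace.unbounded_univ ℝ E (h ▸ hs)⟩

theorem Metric.infDist_image_le_of_holder {X Y : Type*} [PseudoMetricSpace X] [ProperSpace X]
    [PseudoMetricSpace Y] {S A : Set X} {B : Set Y} {f : X → Y} {L γ : ℝ}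
    (hf : ∀ x ∈ S, ∀ y ∈ S, dist (f x) (f y) ≤ L * dist x y ^ γ)
    (hA : IsClosed A) (hAne : A.Nonempty) (hAS : A ⊆ S) (hAB : MapsTo f A B)
    {z : X} (hz : z ∈ S) : infDist (f z) B ≤ L * infDist z A ^ γ := by
  obtain ⟨w, hw, hzw⟩ := hA.exists_infDist_eq_dist hAne z
  calc infDist (f z) B ≤ dist (f z) (f w) := infDist_le_dist_of_mem (hAB hw)
    _ ≤ L * dist z w ^ γ := hf z hz w (hAS hw)
    _ = L * infDist z A ^ γ := by rw [hzw]

theorem Real.mul_rpow_le_of_le_mul_rpow {a b L γ α : ℝ} (ha : 0 ≤ a) (hb : 0 ≤ b) (hL : 0 ≤ L)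
    (hα : 0 ≤ α) (h : a ≤ L * b ^ γ) : a ^ α ≤ L ^ α * b ^ (γ * α) := by
  calc a ^ α ≤ (L * b ^ γ) ^ α := Real.rpow_le_rpow ha h hα
    _ = L ^ α * b ^ (γ * α) := by
      rw [Real.mul_rpow hL (Real.rpow_nonneg hb γ), Real.rpow_mul hb]

theorem stmt7_general (n : ℕ) (Ω₁ Ω₂ : Set (EuclideanSpace ℂ (Fin n)))
    (hb₁ : Bornology.IsBounded Ω₁)
    (F : EuclideanSpace ℂ (Fin n) → EuclideanSpace ℂ (Fin n))
    (hmap : Set.MapsTo F Ω₁ Ω₂) (hbd : Set.MapsTo F (frontier Ω₁) (frontier Ω₂))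
    (γ L : ℝ) (hγ0 : 0 < γ) (hL : 0 < L)
    (hHolder : ∀ x ∈ closure Ω₁, ∀ y ∈ closure Ω₁, dist (F x) (F y) ≤ L * dist x y ^ γ)
    (ρ₂ : EuclideanSpace ℂ (Fin n) → ℝ) (C α : ℝ) (hC : 0 < C) (hα : 0 < α)
    (hρ₂ : ∀ w ∈ Ω₂, -ρ₂ w ≤ C * Metric.infDist w (frontier Ω₂) ^ α) :
    ∀ z ∈ Ω₁, -(ρ₂ (F z)) ≤ C * L ^ α * Metric.infDist z (frontier Ω₁) ^ (γ * α) := by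
  intro z hz
  have hδ : infDist (F z) (frontier Ω₂) ≤ L * infDist z (frontier Ω₁) ^ γ := by
    rcases subsingleton_or_nontrivial (EuclideanSpace ℂ (Fin n)) with _ | _
    · rw [infDist_eq_zero_of_subsingleton, infDist_eq_zero_of_subsingleton,
        Real.zero_rpow hγ0.ne', mul_zero]
    · exact infDist_image_le_of_holder hHolder isClosed_frontier (hb₁.nonempty_frontier ⟨z, hz⟩)
        frontier_subset_closure hbd (subset_closure hz)
  calc -(ρ₂ (F z)) ≤ C * infDist (F z) (frontier Ω₂) ^ α := hρ₂ (F z) (hmap hz)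
    _ ≤ C * (L ^ α * infDist z (frontier Ω₁) ^ (γ * α)) :=
      mul_le_mul_of_nonneg_left
        (Real.mul_rpow_le_of_le_mul_rpow infDist_nonneg infDist_nonneg hL.le hα.le hδ) hC.le
    _ = C * L ^ α * infDist z (frontier Ω₁) ^ (γ * α) := (mul_assoc _ _ _).symm

theorem stmt7 (n : ℕ) (Ω₁ Ω₂ : Set (EuclideanSpace ℂ (Fin n)))
    (h₁ : IsOpen Ω₁) (h₂ : IsOpen Ω₂)
    (hb₁ : Bornology.IsBounded Ω₁) (hb₂ : Bornology.IsBounded Ω₂)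
    (F : EuclideanSpace ℂ (Fin n) → EuclideanSpace ℂ (Fin n))
    (hmap : Set.MapsTo F Ω₁ Ω₂) (hbd : Set.MapsTo F (frontier Ω₁) (frontier Ω₂))
    (γ L : ℝ) (hγ0 : 0 < γ) (hγ1 : γ ≤ 1) (hL : 0 < L)
    (hHolder : ∀ x ∈ closure Ω₁, ∀ y ∈ closure Ω₁, dist (F x) (F y) ≤ L * dist x y ^ γ)
    (ρ₂ : EuclideanSpace ℂ (Fin n) → ℝ) (C α : ℝ) (hC : 0 < C) (hα : 0 < α)
    (hρ₂ : ∀ w ∈ Ω₂, -ρ₂ w ≤ C * Metric.infDist w (frontier Ω₂) ^ α) :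
    ∀ z ∈ Ω₁, -(ρ₂ (F z)) ≤ C * L ^ α * Metric.infDist z (frontier Ω₁) ^ (γ * α) :=
  stmt7_general n Ω₁ Ω₂ hb₁ F hmap hbd γ L hγ0 hL hHolder ρ₂ C α hC hα hρ₂
end

section
/- Let Ω ⊆ ℂⁿ be open and connected containing 0, let a₁, …, a_n > 0, and suppose that for every θ ∈ ℝ and z ∈ Ω, the point F_θ(z) = (e^{i a₁ θ} z₁, …, e^{i a_n θ} z_n) lies in Ω. If g : Ω → ℂ is holomorphic and satisfies g(F_θ(z)) = g(z) for all θ ∈ ℝ and z ∈ Ω, then g is constant on Ω. -/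
/-!
Extend the angle θ to a complex parameter w: for `z` in a ball around `0` inside `Ω`, the map
`w ↦ F_w(z)` is holomorphic, and for `Im w ≥ 0` it stays in that ball, since the `j`-th coordinate
is scaled by `e^{-a_j Im w} ≤ 1`. The holomorphic function `w ↦ g(F_w(z))` is constant on `ℝ`,
hence on the closed upper half-plane; along `w = i t`, `t → ∞`, we have `F_w(z) → 0`, so
`g(z) = g(0)`. Thus `g` is constant near `0`, and the one-variable identity theorem on complex
lines propagates this through the connected set `Ω`.
-/

open Complex Metric Filter Topology Set

section IdentityTheorem

variable {E F : Type*} [NormedAddCommGroup E] [NormedSpace ℂ E]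
  [NormedAddCommGroup F] [NormedSpace ℂ F] [CompleteSpace F]

theorem Convex.eq_const_of_differentiableOn {B : Set E} (hB : IsOpen B) (hBc : Convex ℝ B)
    {g : E → F} (hg : DifferentiableOn ℂ g B) {z : E} (hz : z ∈ B) {c : F}
    (hgz : g =ᶠ[𝓝 z] fun _ => c) {p : E} (hp : p ∈ B) : g p = c := by
  set L : ℂ → E := fun w => z + w • (p - z)
  have hL : Differentiable ℂ L := (differentiable_id.smul_const _).const_add _
  have hV : Convex ℝ (L ⁻¹' B) :=
    (hBc.translate_preimage_right z).linear_preimage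
      ((LinearMap.toSpanSingleton ℂ E (p - z)).restrictScalars ℝ)
  have hL0 : L 0 = z := by simp [L]
  have hanalytic : AnalyticOnNhd ℂ (g ∘ L) (L ⁻¹' B) :=
    (hg.comp hL.differentiableOn (mapsTo_preimage L B)).analyticOnNhd
      (hB.preimage hL.continuous)
  have hnear : g ∘ L =ᶠ[𝓝 0] fun _ => c :=
    hgz.comp_tendsto (hL0 ▸ hL.continuous.tendsto 0)
  simpa [L] using hanalytic.eqOn_of_preconnected_of_eventuallyEq analyticOnNhd_const
    hV.isPreconnected (by simpa [hL0] using hz) hnear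
    (show (1 : ℂ) ∈ L ⁻¹' B by simpa [L] using hp)

theorem IsPreconnected.eqOn_const_of_differentiableOn {Ω : Set E} (hΩ : IsOpen Ω)
    (hconn : IsPreconnected Ω) {g : E → F} (hg : DifferentiableOn ℂ g Ω) {x₀ : E} (hx₀ : x₀ ∈ Ω)
    {c : F} (hgx₀ : g =ᶠ[𝓝 x₀] fun _ => c) : EqOn g (fun _ => c) Ω := by
  set u := {x | g =ᶠ[𝓝 x] fun _ => c}
  suffices hclosed : closure u ∩ Ω ⊆ u from fun z hz =>
    (hconn.subset_of_closure_inter_subset isOpen_setOfPred_eventually_nhds ⟨x₀, hx₀, hgx₀⟩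
      hclosed hz).self_of_nhds
  rintro x ⟨hxu, hxΩ⟩
  obtain ⟨ε, hε, hεΩ⟩ := Metric.isOpen_iff.mp hΩ x hxΩ
  obtain ⟨y, hyu, hy⟩ := Metric.mem_closure_iff.mp hxu ε hε
  filter_upwards [ball_mem_nhds x hε] with p hp
  exact (convex_ball x ε).eq_const_of_differentiableOn isOpen_ball (hg.mono hεΩ)
    (mem_ball'.mpr hy) hyu hp

theorem eqOn_im_nonneg_of_ofReal_eq {U : Set ℂ} (hU : IsOpen U) (hsub : {w : ℂ | 0 ≤ w.im} ⊆ U)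
    {f : ℂ → F} (hf : DifferentiableOn ℂ f U) {c : F} (hc : ∀ x : ℝ, f x = c) {w : ℂ}
    (hw : 0 ≤ w.im) : f w = c := by
  set V := connectedComponentIn U 0
  have hHV : {w : ℂ | 0 ≤ w.im} ⊆ V :=
    (convex_halfSpace_im_ge 0).isPreconnected.subset_connectedComponentIn (by simp) hsub
  have hreal : ∃ᶠ w in 𝓝[≠] (0 : ℂ), f w = c := by
    have : Tendsto ((↑) : ℝ → ℂ) (𝓝[≠] 0) (𝓝[≠] 0) :=
      Complex.continuous_ofReal.continuousWithinAt.tendsto_nhdsWithin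
        (fun x hx => by simpa using hx)
    exact this.frequently (Frequently.of_forall hc)
  exact ((hf.mono (connectedComponentIn_subset U 0)).analyticOnNhd hU.connectedComponentIn
    |>.eqOn_of_preconnected_of_frequently_eq analyticOnNhd_const
      isPreconnected_connectedComponentIn (hHV (by simp)) hreal) (hHV hw)

end IdentityTheorem

section WeightedRotation

variable {ι : Type*}

noncomputable def weightedRotation (a : ι → ℝ) (w : ℂ) (z : EuclideanSpace ℂ ι) :
    EuclideanSpace ℂ ι :=
  WithLp.toLp 2 fun j => exp (I * a j * w) * z j

theorem norm_exp_I_mul_mul (b : ℝ) (w : ℂ) : ‖exp (I * b * w)‖ = Real.exp (-(b * w.im)) := by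
  simp [Complex.norm_exp, Complex.mul_re]

theorem norm_weightedRotation_apply (a : ι → ℝ) (w : ℂ) (z : EuclideanSpace ℂ ι) (j : ι) :
    ‖weightedRotation a w z j‖ = Real.exp (-(a j * w.im)) * ‖z j‖ := by
  simp [weightedRotation, norm_exp_I_mul_mul]

theorem differentiable_weightedRotation [Fintype ι] (a : ι → ℝ) (z : EuclideanSpace ℂ ι) :
    Differentiable ℂ fun w => weightedRotation a w z :=
  (PiLp.continuousLinearEquiv 2 ℂ fun _ : ι => ℂ).symm.differentiable.comp <|
    differentiable_pi.mpr fun _ =>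
      ((differentiable_const _).mul differentiable_id).cexp.mul_const _

theorem norm_weightedRotation_le [Fintype ι] {a : ι → ℝ} (ha : ∀ j, 0 ≤ a j) {w : ℂ}
    (hw : 0 ≤ w.im) (z : EuclideanSpace ℂ ι) : ‖weightedRotation a w z‖ ≤ ‖z‖ := by
  rw [EuclideanSpace.norm_eq, EuclideanSpace.norm_eq]
  gcongr with j
  rw [norm_weightedRotation_apply]
  exact mul_le_of_le_one_left (norm_nonneg _)
    (Real.exp_le_one_iff.mpr (neg_nonpos.mpr (mul_nonneg (ha j) hw)))

theorem tendsto_weightedRotation_I_mul_atTop [Fintype ι] {a : ι → ℝ} (ha : ∀ j, 0 < a j)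
    (z : EuclideanSpace ℂ ι) :
    Tendsto (fun t : ℝ => weightedRotation a (I * t) z) atTop (𝓝 0) := by
  have hcoord : Tendsto (fun t : ℝ => (weightedRotation a (I * t) z).ofLp) atTop (𝓝 0) := by
    refine tendsto_pi_nhds.mpr fun j => tendsto_zero_iff_norm_tendsto_zero.mpr ?_
    have hdecay : Tendsto (fun t : ℝ => Real.exp (-(a j * t))) atTop (𝓝 0) :=
      Real.tendsto_exp_atBot.comp
        (tendsto_neg_atTop_atBot.comp (tendsto_id.const_mul_atTop (ha j)))
    simpa [norm_weightedRotation_apply] using hdecay.mul_const ‖z j‖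
  exact (PiLp.continuous_toLp 2 _).tendsto 0 |>.comp hcoord

theorem apply_eq_apply_zero_of_weightedRotation_invariant [Fintype ι] {F : Type*}
    [NormedAddCommGroup F] [NormedSpace ℂ F] [CompleteSpace F] {a : ι → ℝ} (ha : ∀ j, 0 < a j)
    {r : ℝ} {g : EuclideanSpace ℂ ι → F} (hg : DifferentiableOn ℂ g (ball 0 r))
    (hginv : ∀ (θ : ℝ), ∀ z ∈ ball 0 r, g (weightedRotation a θ z) = g z)
    {z : EuclideanSpace ℂ ι} (hz : z ∈ ball 0 r) : g z = g 0 := by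
  have hrot := differentiable_weightedRotation a z
  have hupper : ∀ t : ℝ, 0 ≤ t → g (weightedRotation a (I * t) z) = g z := fun t ht =>
    eqOn_im_nonneg_of_ofReal_eq (isOpen_ball.preimage hrot.continuous)
      (fun w hw => mem_ball_zero_iff.mpr
        ((norm_weightedRotation_le (fun j => (ha j).le) hw z).trans_lt (mem_ball_zero_iff.mp hz)))
      (hg.comp hrot.differentiableOn (mapsTo_preimage _ _)) (fun θ => hginv θ z hz)
      (by simpa using ht)
  have hg0 : ContinuousAt g 0 :=
    hg.continuousOn.continuousAt (ball_mem_nhds 0 (pos_of_mem_ball hz))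
  refine tendsto_nhds_unique ?_ (hg0.tendsto.comp (tendsto_weightedRotation_I_mul_atTop ha z))
  exact tendsto_const_nhds.congr' <|
    (eventually_ge_atTop 0).mono fun t ht => (hupper t ht).symm

end WeightedRotation

theorem stmt11_general (n : ℕ) (Ω : Set (EuclideanSpace ℂ (Fin n))) (hΩ : IsOpen Ω)
    (hconn : IsConnected Ω) (h0 : (0 : EuclideanSpace ℂ (Fin n)) ∈ Ω)
    (a : Fin n → ℝ) (ha : ∀ j, 0 < a j)
    (g : EuclideanSpace ℂ (Fin n) → ℂ) (hg : DifferentiableOn ℂ g Ω)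
    (hginv : ∀ (θ : ℝ), ∀ z ∈ Ω,
      g (WithLp.toLp 2 (fun j => Complex.exp (Complex.I * (a j) * θ) * z j) : EuclideanSpace ℂ (Fin n)) = g z) :
    ∀ z ∈ Ω, g z = g 0 := by
  obtain ⟨r, hr, hball⟩ := Metric.isOpen_iff.mp hΩ 0 h0
  have hnear : g =ᶠ[𝓝 0] fun _ => g 0 :=
    eventually_of_mem (ball_mem_nhds 0 hr) fun z hz =>
      apply_eq_apply_zero_of_weightedRotation_invariant ha (hg.mono hball)
        (fun θ z hz => hginv θ z (hball hz)) hz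
  exact hconn.isPreconnected.eqOn_const_of_differentiableOn hΩ hg h0 hnear

theorem stmt11 (n : ℕ) (Ω : Set (EuclideanSpace ℂ (Fin n))) (hΩ : IsOpen Ω)
    (hconn : IsConnected Ω) (h0 : (0 : EuclideanSpace ℂ (Fin n)) ∈ Ω)
    (a : Fin n → ℝ) (ha : ∀ j, 0 < a j)
    (hinv : ∀ (θ : ℝ), ∀ z ∈ Ω,
      (WithLp.toLp 2 (fun j => Complex.exp (Complex.I * (a j) * θ) * z j) : EuclideanSpace ℂ (Fin n)) ∈ Ω)
    (g : EuclideanSpace ℂ (Fin n) → ℂ) (hg : DifferentiableOn ℂ g Ω)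
    (hginv : ∀ (θ : ℝ), ∀ z ∈ Ω,
      g (WithLp.toLp 2 (fun j => Complex.exp (Complex.I * (a j) * θ) * z j) : EuclideanSpace ℂ (Fin n)) = g z) :
    ∀ z ∈ Ω, g z = g 0 :=
  stmt11_general n Ω hΩ hconn h0 a ha g hg hginv
end
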